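/- For a, b in (0,1], every x in [0,1] \ A with x ≠ 0 and x ≠ 1 has some iterate f^n(x) lying in A = (1/2 - b/4, 1/2 + a/4], where f = f_{a,b}. -/

import Mathlib

noncomputable def fab (a b x : ℝ) : ℝ :=
  if x ≤ 1/2 then x * (1 + a - a * x) else x * (1 - b + b * x)

/-!
On `[0, 1/2]` the map is `y ↦ y + a y (1 - y)`, which pushes a point `x > 0` to the right by at
least `a x / 2` per step as long as the orbit stays in `(0, 1/2 - b/4]`; on `(1/2, 1]` it is
`y ↦ y - b y (1 - y)`, which pushes a point `x < 1` to the left by at least `b (1 - x) / 2`.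
So the orbit must leave the side it started on, and a single step cannot jump over
`A = (1/2 - b/4, 1/2 + a/4]`: `f ≤ 1/2 + a/4` on `[0, 1/2]` and `f > 1/2 - b/4` on `(1/2, 1]`.
-/

open Function Set

section Dynamics

variable {α : Type*} {g : α → α}

theorem exists_iterate_notMem_of_drift (φ : α → ℝ) {S : Set α} {M δ : ℝ} (hδ : 0 < δ)
    (hM : ∀ y ∈ S, φ y ≤ M) (hdrift : ∀ y ∈ S, φ y + δ ≤ φ (g y)) (x : α) :
    ∃ n, g^[n] x ∉ S := by
  by_contra! hS
  have hgrowth : ∀ n : ℕ, φ x + n * δ ≤ φ (g^[n] x) := by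
    intro n
    induction n with
    | zero => simp
    | succ n ih =>
      rw [iterate_succ_apply']
      push_cast
      linarith [hdrift _ (hS n)]
  obtain ⟨n, hn⟩ := exists_nat_gt ((M - φ x) / δ)
  rw [div_lt_iff₀ hδ] at hn
  linarith [hgrowth n, hM _ (hS n)]

theorem exists_iterate_mem_of_mapsTo_union {S A : Set α} (hg : MapsTo g S (S ∪ A)) {x : α}
    (hx : x ∈ S) (hexit : ∃ n, g^[n] x ∉ S) : ∃ n, g^[n] x ∈ A := by
  by_contra! hA
  obtain ⟨n, hn⟩ := hexit
  have hstay : ∀ n, g^[n] x ∈ S := by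
    intro n
    induction n with
    | zero => exact hx
    | succ n ih =>
      rw [iterate_succ_apply']
      exact (hg ih).resolve_right (iterate_succ_apply' g n x ▸ hA (n + 1))
  exact hn (hstay n)

end Dynamics

section Fab

variable {a b y : ℝ}

theorem fab_of_le_half (hy : y ≤ 1/2) : fab a b y = y + a * y * (1 - y) := by
  rw [fab, if_pos hy]
  ring

theorem fab_of_half_lt (hy : 1/2 < y) : fab a b y = y - b * y * (1 - y) := by
  rw [fab, if_neg hy.not_ge]
  ring

theorem fab_le_of_le_half (ha : 0 ≤ a) (hy : y ≤ 1/2) : fab a b y ≤ 1/2 + a/4 := by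
  rw [fab_of_le_half hy]
  nlinarith [mul_nonneg ha (sq_nonneg (1/2 - y))]

theorem lt_fab_of_half_lt (hb : 0 ≤ b) (hy : 1/2 < y) : 1/2 - b/4 < fab a b y := by
  rw [fab_of_half_lt hy]
  nlinarith [mul_nonneg hb (sq_nonneg (y - 1/2))]

theorem exists_iterate_fab_mem_of_le (ha : 0 < a) (hb : 0 ≤ b) {x : ℝ} (hx0 : 0 < x)
    (hx : x ≤ 1/2 - b/4) : ∃ n, (fab a b)^[n] x ∈ Ioc (1/2 - b/4) (1/2 + a/4) := by
  have hdrift : ∀ y ∈ Icc x (1/2 - b/4), y + a * x / 2 ≤ fab a b y := by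
    rintro y ⟨hxy, hyT⟩
    have hprod : x * (1/2) ≤ y * (1 - y) := by nlinarith
    rw [fab_of_le_half (by linarith)]
    nlinarith [mul_le_mul_of_nonneg_left hprod ha.le]
  have hmaps : MapsTo (fab a b) (Icc x (1/2 - b/4))
      (Icc x (1/2 - b/4) ∪ Ioc (1/2 - b/4) (1/2 + a/4)) := by
    intro y hy
    have hxg : x ≤ fab a b y := by nlinarith [hdrift y hy, hy.1]
    rcases le_or_gt (fab a b y) (1/2 - b/4) with hT | hT
    · exact Or.inl ⟨hxg, hT⟩
    · exact Or.inr ⟨hT, fab_le_of_le_half ha.le (by linarith [hy.2])⟩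
  exact exists_iterate_mem_of_mapsTo_union hmaps ⟨le_rfl, hx⟩
    (exists_iterate_notMem_of_drift id (by positivity) (fun y hy => hy.2) hdrift x)

theorem exists_iterate_fab_mem_of_lt (ha : 0 ≤ a) (hb : 0 < b) {x : ℝ} (hx1 : x < 1)
    (hx : 1/2 + a/4 < x) : ∃ n, (fab a b)^[n] x ∈ Ioc (1/2 - b/4) (1/2 + a/4) := by
  have hdrift : ∀ y ∈ Ioc (1/2 + a/4) x, -y + b * (1 - x) / 2 ≤ -fab a b y := by
    rintro y ⟨hUy, hyx⟩
    have hprod : (1 - x) * (1/2) ≤ y * (1 - y) := by nlinarith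
    rw [fab_of_half_lt (by linarith)]
    nlinarith [mul_le_mul_of_nonneg_left hprod hb.le]
  have hmaps : MapsTo (fab a b) (Ioc (1/2 + a/4) x)
      (Ioc (1/2 + a/4) x ∪ Ioc (1/2 - b/4) (1/2 + a/4)) := by
    intro y hy
    have hgx : fab a b y ≤ x := by nlinarith [hdrift y hy, hy.2]
    rcases le_or_gt (fab a b y) (1/2 + a/4) with hU | hU
    · exact Or.inr ⟨lt_fab_of_half_lt hb.le (by linarith [hy.1]), hU⟩
    · exact Or.inl ⟨hU, hgx⟩
  have hδ : 0 < b * (1 - x) / 2 := by nlinarith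
  exact exists_iterate_mem_of_mapsTo_union hmaps ⟨hx, le_rfl⟩
    (exists_iterate_notMem_of_drift Neg.neg hδ (fun y hy => neg_le_neg hy.1.le) hdrift x)

end Fab

theorem stmt8 (a b : ℝ) (ha : a ∈ Set.Ioc (0:ℝ) 1) (hb : b ∈ Set.Ioc (0:ℝ) 1)
    (x : ℝ) (hx : x ∈ Set.Icc (0:ℝ) 1 \ Set.Ioc (1/2 - b/4) (1/2 + a/4))
    (hx0 : x ≠ 0) (hx1 : x ≠ 1) :
    ∃ n : ℕ, (fab a b)^[n] x ∈ Set.Ioc (1/2 - b/4) (1/2 + a/4) := by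
  obtain ⟨⟨hx0', hx1'⟩, hxA⟩ := hx
  rcases le_or_gt x (1/2 - b/4) with hT | hT
  · exact exists_iterate_fab_mem_of_le ha.1 hb.1.le (hx0'.lt_of_ne' hx0) hT
  · have hU : 1/2 + a/4 < x := not_le.mp fun hU => hxA ⟨hT, hU⟩
    exact exists_iterate_fab_mem_of_lt ha.1.le hb.1 (hx1'.lt_of_ne hx1) hU
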